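/- Let σ be a positive semidefinite operator on a finite-dimensional complex Hilbert space, let α ∈ (0,1) with conjugate index α' = α/(α−1) < 0, and let X, Y be positive semidefinite operators with supp(σ) ⊆ supp(Y). Then ⟨X, Y⟩_σ ≥ ‖X‖_{α,σ} · ‖Y‖_{α',σ} (reverse Hölder inequality), where the negative powers appearing in ‖Y‖_{α',σ} are taken on the relevant supports (Moore–Penrose convention). -/

import Mathlib

open Matrix
open scoped ComplexOrder Kronecker

noncomputable section

/-- Real power of a Hermitian matrix via functional calculus on its support
(Moore–Penrose convention, also for negative powers); junk value `0` for
non-Hermitian input. -/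
def Matrix.rpowH {ι : Type*} [Fintype ι] [DecidableEq ι] (A : Matrix ι ι ℂ) (p : ℝ) :
    Matrix ι ι ℂ :=
  if hA : A.IsHermitian then
    (hA.eigenvectorUnitary : Matrix ι ι ℂ) *
      Matrix.diagonal (fun i => ((hA.eigenvalues i ^ p : ℝ) : ℂ)) *
      star (hA.eigenvectorUnitary : Matrix ι ι ℂ)
  else 0

/-- The operator absolute value `|A| = (A† A)^(1/2)`. -/
def Matrix.absM {ι : Type*} [Fintype ι] [DecidableEq ι] (A : Matrix ι ι ℂ) :
    Matrix ι ι ℂ :=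
  Matrix.rpowH (Aᴴ * A) (2⁻¹ : ℝ)

/-- Real part of the trace. -/
def retr {ι : Type*} [Fintype ι] (A : Matrix ι ι ℂ) : ℝ :=
  (Matrix.trace A).re

/-- The σ-weighted `p`-(quasi)norm `‖X‖_{p,σ} = (Tr[|σ^{1/(2p)} X σ^{1/(2p)}|^p])^{1/p}`. -/
def wNorm {ι : Type*} [Fintype ι] [DecidableEq ι]
    (p : ℝ) (σ X : Matrix ι ι ℂ) : ℝ :=
  (retr (Matrix.rpowH
    (Matrix.absM (Matrix.rpowH σ (1 / (2 * p)) * X * Matrix.rpowH σ (1 / (2 * p)))) p))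
    ^ (1 / p)

/-- The Kubo–Martin–Schwinger σ-weighted inner product
`⟨X, Y⟩_σ = Tr[X† σ^{1/2} Y σ^{1/2}]` (its real part; it is real for the
operators considered here). -/
def kmsInner {ι : Type*} [Fintype ι] [DecidableEq ι]
    (σ X Y : Matrix ι ι ℂ) : ℝ :=
  retr (Xᴴ * Matrix.rpowH σ (2⁻¹ : ℝ) * Y * Matrix.rpowH σ (2⁻¹ : ℝ))

/-!
Put `M = σ^{1/(2α)} X σ^{1/(2α)}` and `N = σ^{1/(2α')} Y σ^{1/(2α')}`. Both are positive
semidefinite, the weighted quasi-norms of `X` and `Y` are the Schatten quasi-norms `‖M‖_α` and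
`‖N‖_{α'}`, and since `1/(2α) + 1/(2α') = 1/2`, cyclicity of the trace gives `⟨X, Y⟩_σ = Tr[M N]`.
In eigenbases `(u_i)` of `M` and `(v_j)` of `N`, `Tr[M N] = ∑ D_ij λ_i μ_j` for the doubly
stochastic matrix `D_ij = |⟨u_i, v_j⟩|²`, while `∑ λ_i^α = ∑ D_ij λ_i^α` and
`∑ μ_j^{α'} = ∑ D_ij μ_j^{α'}`. So the claim is the scalar reverse Hölder inequality with weights
`D_ij`, which is Hölder's inequality with exponents `1/α`, `1/(1-α)` applied to
`D λ^α = (D λ μ)^α (D μ^{α'})^{1-α}`. The support condition gives `ker N ⊆ ker M`, so pairs with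
`μ_j = 0` carry no mass `D_ij λ_i`, which is what the convention `0^{α'} = 0` requires.
-/

namespace Real

variable {κ : Type*} (s : Finset κ)

lemma sum_rpow_mul_rpow_le {x y : κ → ℝ} (hx : ∀ k ∈ s, 0 ≤ x k) (hy : ∀ k ∈ s, 0 ≤ y k)
    {a : ℝ} (ha0 : 0 < a) (ha1 : a < 1) :
    ∑ k ∈ s, x k ^ a * y k ^ (1 - a) ≤ (∑ k ∈ s, x k) ^ a * (∑ k ∈ s, y k) ^ (1 - a) := by
  have hpq : HolderConjugate a⁻¹ (1 - a)⁻¹ := by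
    simpa using HolderTriple.of_pos (inv_pos.2 ha0) (inv_pos.2 (sub_pos.2 ha1))
  convert inner_le_Lp_mul_Lq_of_nonneg s hpq (fun k hk => rpow_nonneg (hx k hk) a)
    (fun k hk => rpow_nonneg (hy k hk) (1 - a)) using 3
  · exact Finset.sum_congr rfl fun k hk => (rpow_rpow_inv (hx k hk) ha0.ne').symm
  · rw [one_div, inv_inv]
  · exact Finset.sum_congr rfl fun k hk => (rpow_rpow_inv (hy k hk) (sub_pos.2 ha1).ne').symm
  · rw [one_div, inv_inv]

lemma mul_rpow_eq_mul_rpow_mul_rpow {w f g p : ℝ} (hw : 0 ≤ w) (hf : 0 ≤ f) (hg : 0 ≤ g)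
    (hfg : g = 0 → w * f = 0) (hp0 : 0 < p) (hp1 : p < 1) :
    w * f ^ p = (w * f * g) ^ p * (w * g ^ p.conjExponent) ^ (1 - p) := by
  rcases hg.eq_or_lt with rfl | hg
  · rcases mul_eq_zero.mp (hfg rfl) with rfl | rfl <;> simp [zero_rpow hp0.ne']
  have hq : p.conjExponent * (1 - p) = -p := by
    rw [conjExponent]
    field_simp [show p - 1 ≠ 0 by linarith]
    ring
  calc w * f ^ p = w ^ (p + (1 - p)) * f ^ p * g ^ (p + -p) := by
        rw [add_sub_cancel, add_neg_cancel, rpow_one, rpow_zero, mul_one]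
    _ = (w * f * g) ^ p * (w * g ^ p.conjExponent) ^ (1 - p) := by
        rw [rpow_add' hw (by norm_num), rpow_add hg, mul_rpow (mul_nonneg hw hf) hg.le,
          mul_rpow hw hf, mul_rpow hw (rpow_nonneg hg.le _), ← rpow_mul hg.le, hq]
        ring

/-- Here `0 ^ p.conjExponent = 0`: terms with `g k = 0` are absent from the second sum, and by
`hfg` also from the first. -/
theorem Lp_mul_Lq_le_inner_of_lt_one {w f g : κ → ℝ} (hw : ∀ k ∈ s, 0 ≤ w k)
    (hf : ∀ k ∈ s, 0 ≤ f k) (hg : ∀ k ∈ s, 0 ≤ g k) (hfg : ∀ k ∈ s, g k = 0 → w k * f k = 0)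
    {p : ℝ} (hp0 : 0 < p) (hp1 : p < 1) :
    (∑ k ∈ s, w k * f k ^ p) ^ (1 / p) *
        (∑ k ∈ s, w k * g k ^ p.conjExponent) ^ (1 / p.conjExponent) ≤
      ∑ k ∈ s, w k * f k * g k := by
  set q := p.conjExponent
  set S := ∑ k ∈ s, w k * f k ^ p
  set R := ∑ k ∈ s, w k * g k ^ q
  set T := ∑ k ∈ s, w k * f k * g k
  have hq : q ≠ 0 := (div_neg_of_pos_of_neg hp0 (by linarith)).ne
  have hS0 : 0 ≤ S := Finset.sum_nonneg fun k hk => mul_nonneg (hw k hk) (rpow_nonneg (hf k hk) p)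
  have hR0 : 0 ≤ R := Finset.sum_nonneg fun k hk => mul_nonneg (hw k hk) (rpow_nonneg (hg k hk) q)
  have hT0 : 0 ≤ T := Finset.sum_nonneg fun k hk =>
    mul_nonneg (mul_nonneg (hw k hk) (hf k hk)) (hg k hk)
  have hHolder : S ≤ T ^ p * R ^ (1 - p) :=
    (Finset.sum_congr rfl fun k hk => mul_rpow_eq_mul_rpow_mul_rpow (hw k hk) (hf k hk)
      (hg k hk) (hfg k hk) hp0 hp1).trans_le <|
    sum_rpow_mul_rpow_le s (fun k hk => mul_nonneg (mul_nonneg (hw k hk) (hf k hk)) (hg k hk))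
      (fun k hk => mul_nonneg (hw k hk) (rpow_nonneg (hg k hk) q)) hp0 hp1
  rcases hR0.eq_or_lt with hR | hR
  · rw [← hR, zero_rpow (one_div_ne_zero hq), mul_zero]
    exact hT0
  have hexp : (1 - p) / p + 1 / q = 0 := by
    simp only [q, conjExponent]
    field_simp [show p - 1 ≠ 0 by linarith]
    ring
  calc S ^ (1 / p) * R ^ (1 / q) ≤ (T ^ p * R ^ (1 - p)) ^ (1 / p) * R ^ (1 / q) := by
        gcongr
    _ = T * R ^ ((1 - p) / p + 1 / q) := by
        rw [mul_rpow (rpow_nonneg hT0 p) (rpow_nonneg hR0 _), ← rpow_mul hT0, ← rpow_mul hR0,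
          mul_one_div_cancel hp0.ne', rpow_one, rpow_add hR, mul_one_div, mul_assoc]
    _ = T := by rw [hexp, rpow_zero, mul_one]

end Real

namespace Matrix

variable {ι : Type*} [Fintype ι] [DecidableEq ι]

section rpowH

variable {A : Matrix ι ι ℂ}

lemma IsHermitian.rpowH_eq_cfc (hA : A.IsHermitian) (p : ℝ) :
    A.rpowH p = cfc (fun x : ℝ => x ^ p) A := by
  rw [rpowH, dif_pos hA, hA.cfc_eq, IsHermitian.cfc, Unitary.conjStarAlgAut_apply]
  rfl

lemma IsHermitian.rpowH_one (hA : A.IsHermitian) : A.rpowH 1 = A := by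
  rw [hA.rpowH_eq_cfc]
  simp only [Real.rpow_one]
  exact cfc_id' ℝ A

lemma IsHermitian.retr_rpowH (hA : A.IsHermitian) (p : ℝ) :
    retr (A.rpowH p) = ∑ i, hA.eigenvalues i ^ p := by
  rw [retr, rpowH, dif_pos hA, trace_mul_cycle, Unitary.coe_star_mul_self, one_mul,
    trace_diagonal]
  simp

namespace PosSemidef

lemma nonneg_of_mem_spectrum (hA : A.PosSemidef) {x : ℝ} (hx : x ∈ spectrum ℝ A) : 0 ≤ x := by
  rw [hA.isHermitian.spectrum_real_eq_range_eigenvalues] at hx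
  obtain ⟨i, rfl⟩ := hx
  exact hA.eigenvalues_nonneg i

open scoped MatrixOrder in
lemma rpowH (hA : A.PosSemidef) (p : ℝ) : (A.rpowH p).PosSemidef := by
  rw [hA.isHermitian.rpowH_eq_cfc, ← nonneg_iff_posSemidef]
  exact cfc_nonneg fun x hx => Real.rpow_nonneg (hA.nonneg_of_mem_spectrum hx) p

lemma rpowH_mul_rpowH (hA : A.PosSemidef) {a b : ℝ} (hab : a + b ≠ 0) :
    A.rpowH a * A.rpowH b = A.rpowH (a + b) := by
  rw [hA.isHermitian.rpowH_eq_cfc, hA.isHermitian.rpowH_eq_cfc, hA.isHermitian.rpowH_eq_cfc,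
    ← cfc_mul _ _ _ (A.finite_real_spectrum.continuousOn _)
      (A.finite_real_spectrum.continuousOn _)]
  exact cfc_congr fun x hx => (Real.rpow_add' (hA.nonneg_of_mem_spectrum hx) hab).symm

lemma rpowH_rpowH (hA : A.PosSemidef) (a b : ℝ) : (A.rpowH a).rpowH b = A.rpowH (a * b) := by
  rw [(hA.rpowH a).isHermitian.rpowH_eq_cfc, hA.isHermitian.rpowH_eq_cfc,
    hA.isHermitian.rpowH_eq_cfc, ← cfc_comp' _ _ _
      ((A.finite_real_spectrum.image _).continuousOn _) (A.finite_real_spectrum.continuousOn _)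
      hA.isHermitian.isSelfAdjoint]
  exact cfc_congr fun x hx => (Real.rpow_mul (hA.nonneg_of_mem_spectrum hx) a b).symm

lemma rpowH_mulVec_eq_zero_iff (hA : A.PosSemidef) {p : ℝ} (hp : p ≠ 0) (v : ι → ℂ) :
    A.rpowH p *ᵥ v = 0 ↔ A *ᵥ v = 0 := by
  constructor <;> intro hv
  · rw [← hA.isHermitian.rpowH_one, ← sub_add_cancel 1 p, ← hA.rpowH_mul_rpowH (by simp),
      ← mulVec_mulVec, hv, mulVec_zero]
  · rw [← sub_add_cancel p 1, ← hA.rpowH_mul_rpowH (by simpa), hA.isHermitian.rpowH_one,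
      ← mulVec_mulVec, hv, mulVec_zero]

lemma absM_eq (hA : A.PosSemidef) : A.absM = A := by
  rw [absM, hA.isHermitian.eq, ← hA.isHermitian.rpowH_one, hA.rpowH_mul_rpowH (by norm_num),
    hA.rpowH_rpowH]
  norm_num [hA.isHermitian.rpowH_one]

end PosSemidef

end rpowH

section eigenOverlap

variable {A B : Matrix ι ι ℂ}

def eigenOverlap (hA : A.IsHermitian) (hB : B.IsHermitian) (i j : ι) : ℝ :=
  ‖inner ℂ (hA.eigenvectorBasis i) (hB.eigenvectorBasis j)‖ ^ 2

variable (hA : A.IsHermitian) (hB : B.IsHermitian)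

lemma sum_eigenOverlap_right (i : ι) : ∑ j, eigenOverlap hA hB i j = 1 := by
  simp [eigenOverlap, OrthonormalBasis.sum_sq_norm_inner_left]

lemma sum_eigenOverlap_left (j : ι) : ∑ i, eigenOverlap hA hB i j = 1 := by
  simp [eigenOverlap, OrthonormalBasis.sum_sq_norm_inner_right]

lemma star_eigenvectorUnitary_mul_apply (i j : ι) :
    (star (hA.eigenvectorUnitary : Matrix ι ι ℂ) * hB.eigenvectorUnitary) i j =
      inner ℂ (hA.eigenvectorBasis i) (hB.eigenvectorBasis j) := by
  simp [mul_apply, EuclideanSpace.inner_eq_star_dotProduct, dotProduct, mul_comm]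

lemma trace_diagonal_mul_diagonal_mul_conjTranspose (d e : ι → ℂ) (P : Matrix ι ι ℂ) :
    (diagonal d * P * diagonal e * Pᴴ).trace =
      ∑ i, ∑ j, d i * e j * (P i j * star (P i j)) := by
  simp only [trace, diag_apply, mul_apply (N := Pᴴ), mul_diagonal, diagonal_mul,
    conjTranspose_apply]
  refine Finset.sum_congr rfl fun i _ => Finset.sum_congr rfl fun j _ => ?_
  ring

lemma trace_conj_mul_conj {U V : Matrix ι ι ℂ} (hU : U ∈ unitaryGroup ι ℂ) (D E : Matrix ι ι ℂ) :
    (U * D * star U * (V * E * star V)).trace =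
      (D * (star U * V) * E * (star U * V)ᴴ).trace := by
  have hconj : U * D * star U * (V * E * star V) =
      U * (D * (star U * V) * E * (star U * V)ᴴ) * star U := by
    simp only [← star_eq_conjTranspose, star_mul, star_star, Matrix.mul_assoc,
      Unitary.mul_star_self_of_mem hU, Matrix.mul_one]
  rw [hconj, trace_mul_cycle, Unitary.star_mul_self_of_mem hU, Matrix.one_mul]

lemma trace_mul_eq_sum_eigenOverlap :
    (A * B).trace = ∑ i, ∑ j,
      ((eigenOverlap hA hB i j * hA.eigenvalues i * hB.eigenvalues j : ℝ) : ℂ) := by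
  conv_lhs => rw [hA.spectral_theorem, hB.spectral_theorem]
  rw [Unitary.conjStarAlgAut_apply, Unitary.conjStarAlgAut_apply,
    trace_conj_mul_conj hA.eigenvectorUnitary.2, trace_diagonal_mul_diagonal_mul_conjTranspose]
  refine Finset.sum_congr rfl fun i _ => Finset.sum_congr rfl fun j _ => ?_
  rw [eigenOverlap, star_eigenvectorUnitary_mul_apply, RCLike.star_def, RCLike.mul_conj]
  simp only [Complex.coe_algebraMap, Function.comp_apply, Complex.ofReal_mul, Complex.ofReal_pow]
  ring

lemma eigenOverlap_mul_eigenvalues_eq_zero (hker : ∀ v, B *ᵥ v = 0 → A *ᵥ v = 0) {j : ι}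
    (hj : hB.eigenvalues j = 0) (i : ι) : eigenOverlap hA hB i j * hA.eigenvalues i = 0 := by
  have hAv : A *ᵥ hB.eigenvectorBasis j = 0 :=
    hker _ (by rw [hB.mulVec_eigenvectorBasis, hj, zero_smul])
  have h : (hA.eigenvalues i : ℂ) * inner ℂ (hA.eigenvectorBasis i) (hB.eigenvectorBasis j) = 0 :=
    calc (hA.eigenvalues i : ℂ) * inner ℂ (hA.eigenvectorBasis i) (hB.eigenvectorBasis j)
        = star (A *ᵥ hA.eigenvectorBasis i) ⬝ᵥ hB.eigenvectorBasis j := by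
          rw [hA.mulVec_eigenvectorBasis, EuclideanSpace.inner_eq_star_dotProduct, dotProduct_comm,
            star_smul, star_trivial (hA.eigenvalues i), smul_dotProduct, Complex.real_smul]
      _ = 0 := by rw [star_mulVec, hA.eq, ← dotProduct_mulVec, hAv, dotProduct_zero]
  rcases mul_eq_zero.mp h with h | h
  · rw [Complex.ofReal_eq_zero.mp h, mul_zero]
  · rw [eigenOverlap, h, norm_zero, zero_pow two_ne_zero, zero_mul]

end eigenOverlap

variable {M N : Matrix ι ι ℂ}

theorem PosSemidef.retr_rpowH_mul_le (hM : M.PosSemidef) (hN : N.PosSemidef)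
    (hker : ∀ v, N *ᵥ v = 0 → M *ᵥ v = 0) {p : ℝ} (hp0 : 0 < p) (hp1 : p < 1) :
    retr (M.rpowH p) ^ (1 / p) * retr (N.rpowH p.conjExponent) ^ (1 / p.conjExponent) ≤
      retr (M * N) := by
  have hSM : retr (M.rpowH p) = ∑ k : ι × ι,
      eigenOverlap hM.isHermitian hN.isHermitian k.1 k.2 * hM.isHermitian.eigenvalues k.1 ^ p := by
    simp_rw [hM.isHermitian.retr_rpowH, Fintype.sum_prod_type, ← Finset.sum_mul,
      sum_eigenOverlap_right, one_mul]
  have hSN : retr (N.rpowH p.conjExponent) = ∑ k : ι × ι,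
      eigenOverlap hM.isHermitian hN.isHermitian k.1 k.2 *
        hN.isHermitian.eigenvalues k.2 ^ p.conjExponent := by
    simp_rw [hN.isHermitian.retr_rpowH, Fintype.sum_prod_type_right, ← Finset.sum_mul,
      sum_eigenOverlap_left, one_mul]
  have hT : retr (M * N) = ∑ k : ι × ι, eigenOverlap hM.isHermitian hN.isHermitian k.1 k.2 *
      hM.isHermitian.eigenvalues k.1 * hN.isHermitian.eigenvalues k.2 := by
    rw [retr, trace_mul_eq_sum_eigenOverlap, Fintype.sum_prod_type]
    norm_cast
  rw [hSM, hSN, hT]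
  exact Real.Lp_mul_Lq_le_inner_of_lt_one _ (fun _ _ => sq_nonneg _)
    (fun k _ => hM.eigenvalues_nonneg k.1) (fun k _ => hN.eigenvalues_nonneg k.2)
    (fun k _ hk => eigenOverlap_mul_eigenvalues_eq_zero _ _ hker hk k.1) hp0 hp1

section weighted

variable {σ X Y : Matrix ι ι ℂ}

omit [DecidableEq ι] in
lemma PosSemidef.mulVec_mulVec_eq_zero_of_conj (hY : Y.PosSemidef) {S : Matrix ι ι ℂ}
    (hS : S.IsHermitian) {v : ι → ℂ} (hv : (S * Y * S) *ᵥ v = 0) : Y *ᵥ (S *ᵥ v) = 0 := by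
  rw [← hY.dotProduct_mulVec_zero_iff, star_mulVec, hS.eq, ← dotProduct_mulVec, mulVec_mulVec,
    mulVec_mulVec, hv, dotProduct_zero]

lemma PosSemidef.conj_rpowH (hX : X.PosSemidef) (hσ : σ.PosSemidef) (c : ℝ) :
    (σ.rpowH c * X * σ.rpowH c).PosSemidef := by
  simpa [(hσ.rpowH c).isHermitian.eq] using hX.mul_mul_conjTranspose_same (σ.rpowH c)

lemma PosSemidef.rpowH_mulVec_eq_zero_of_conj (hσ : σ.PosSemidef) (hY : Y.PosSemidef)
    (hsupp : ∀ v, Y *ᵥ v = 0 → σ *ᵥ v = 0) {c d : ℝ} (hc : c ≠ 0) (hd : d ≠ 0) {v : ι → ℂ}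
    (hv : (σ.rpowH d * Y * σ.rpowH d) *ᵥ v = 0) : σ.rpowH c *ᵥ v = 0 := by
  have h : σ *ᵥ (σ.rpowH d *ᵥ v) = 0 :=
    hsupp _ (hY.mulVec_mulVec_eq_zero_of_conj (hσ.rpowH d).isHermitian hv)
  rw [← hσ.rpowH_mulVec_eq_zero_iff hd, mulVec_mulVec, hσ.rpowH_mul_rpowH (by simpa),
    hσ.rpowH_mulVec_eq_zero_iff (by simpa)] at h
  rwa [hσ.rpowH_mulVec_eq_zero_iff hc]

lemma wNorm_of_posSemidef (hσ : σ.PosSemidef) (hX : X.PosSemidef) (p : ℝ) :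
    wNorm p σ X =
      retr ((σ.rpowH (1 / (2 * p)) * X * σ.rpowH (1 / (2 * p))).rpowH p) ^ (1 / p) := by
  rw [wNorm, (hX.conj_rpowH hσ _).absM_eq]

lemma kmsInner_eq_retr_mul (hσ : σ.PosSemidef) (hX : X.IsHermitian) {c d : ℝ}
    (hcd : c + d = 2⁻¹) :
    kmsInner σ X Y = retr (σ.rpowH c * X * σ.rpowH c * (σ.rpowH d * Y * σ.rpowH d)) := by
  have hne : c + d ≠ 0 := by norm_num [hcd]
  have hcomm : σ.rpowH d * σ.rpowH c = σ.rpowH c * σ.rpowH d := by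
    rw [hσ.rpowH_mul_rpowH hne, hσ.rpowH_mul_rpowH (by rwa [add_comm]), add_comm]
  rw [kmsInner, retr, retr, hX.eq, ← hcd, ← hσ.rpowH_mul_rpowH hne]
  nth_rewrite 2 [← hcomm]
  simp only [← Matrix.mul_assoc]
  conv_lhs => rw [trace_mul_comm]
  simp only [← Matrix.mul_assoc]

end weighted

end Matrix

/-- reverse weighted Hölder inequality, `α ∈ (0,1)`.
For a positive semidefinite `σ`, `α ∈ (0,1)` with conjugate index `α' = α/(α-1) < 0`,
and positive semidefinite `X, Y` with `supp σ ⊆ supp Y` (expressed as `ker Y ⊆ ker σ`):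
`⟨X, Y⟩_σ ≥ ‖X‖_{α,σ} ‖Y‖_{α',σ}`, negative powers taken on supports
(Moore–Penrose convention). -/
theorem weighted_reverse_holder
    {ι : Type*} [Fintype ι] [DecidableEq ι]
    (σ X Y : Matrix ι ι ℂ)
    (hσ : σ.PosSemidef) (hX : X.PosSemidef) (hY : Y.PosSemidef)
    (hsupp : ∀ v : ι → ℂ, Y.mulVec v = 0 → σ.mulVec v = 0)
    (α : ℝ) (hα0 : 0 < α) (hα1 : α < 1) (α' : ℝ) (hα' : α' = α / (α - 1)) :
    wNorm α σ X * wNorm α' σ Y ≤ kmsInner σ X Y := by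
  obtain rfl : α' = α.conjExponent := hα'
  have hα'0 : α.conjExponent ≠ 0 := (div_neg_of_pos_of_neg hα0 (by linarith)).ne
  have hcd : 1 / (2 * α) + 1 / (2 * α.conjExponent) = 2⁻¹ := by
    rw [Real.conjExponent]
    field_simp [show α - 1 ≠ 0 by linarith]
    ring
  rw [wNorm_of_posSemidef hσ hX, wNorm_of_posSemidef hσ hY,
    kmsInner_eq_retr_mul hσ hX.isHermitian hcd]
  refine (hX.conj_rpowH hσ _).retr_rpowH_mul_le (hY.conj_rpowH hσ _) (fun v hv => ?_) hα0 hα1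
  rw [← mulVec_mulVec, hσ.rpowH_mulVec_eq_zero_of_conj hY hsupp (by positivity) (by simpa) hv,
    mulVec_zero]
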